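/- arXiv:2602.07426 — 5 statements merged into one kernel-verified Lean document; each statement's English description precedes it below -/
import Mathlib

section
/- For vectors x, y ∈ ℝ^n with all entries strictly positive, if y weakly supermajorizes x (i.e., writing both in non-decreasing order, the partial sums ∑_{i=1}^k y_i ≤ ∑_{i=1}^k x_i for all 1 ≤ k ≤ n) and x is not a permutation of y, then ∑_{i=1}^n log(y_i) < ∑_{i=1}^n log(x_i). -/
/-!
Since `log y - log x ≤ (y - x) / x`, with equality only at `y = x`, it suffices to show
`∑ (yᵢ - xᵢ) / xᵢ ≤ 0`. The weights `1 / xᵢ` are nonnegative and nonincreasing, and every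
prefix sum of `y - x` is nonpositive, so this follows by Abel summation. The first inequality
is strict because `x ≠ y`, as `x = y` would make `x` a permutation of `y`.
-/

open Finset

namespace Fin

variable {R : Type*} [CommRing R] [LinearOrder R] [IsStrictOrderedRing R]

theorem sum_mul_le_mul_sum_of_antitone_of_sum_Iic_nonpos {n : ℕ} {c d : Fin (n + 1) → R}
    (hc : Antitone c) (hd : ∀ i, ∑ j ∈ Iic i, d j ≤ 0) :
    ∑ i, c i * d i ≤ c (last n) * ∑ i, d i := by
  induction n with
  | zero => simp
  | succ n ih =>
    have hprefix : ∀ i : Fin (n + 1), ∑ j ∈ Iic i, d j.castSucc ≤ 0 := fun i => by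
      rw [← sum_Iic_castSucc]; exact hd _
    have hinit := ih (hc.comp_monotone strictMono_castSucc.monotone) hprefix
    have hinit_nonpos : ∑ i : Fin (n + 1), d i.castSucc ≤ 0 := by
      simpa only [← top_eq_last, Iic_top] using hprefix (last n)
    have hlast : c (last (n + 1)) ≤ c (last n).castSucc := hc (le_last _)
    rw [sum_univ_castSucc (fun i => c i * d i), sum_univ_castSucc d]
    calc ∑ i : Fin (n + 1), c i.castSucc * d i.castSucc + c (last _) * d (last _)
        ≤ c (last n).castSucc * ∑ i : Fin (n + 1), d i.castSucc + c (last _) * d (last _) :=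
          add_le_add_left hinit _
      _ ≤ c (last (n + 1)) * ∑ i : Fin (n + 1), d i.castSucc + c (last _) * d (last _) :=
          add_le_add_left (mul_le_mul_of_nonpos_right hlast hinit_nonpos) _
      _ = c (last (n + 1)) * (∑ i : Fin (n + 1), d i.castSucc + d (last _)) := by ring

theorem sum_mul_nonpos_of_antitone_of_sum_Iic_nonpos {n : ℕ} {c d : Fin n → R}
    (hc : Antitone c) (hc₀ : ∀ i, 0 ≤ c i) (hd : ∀ i, ∑ j ∈ Iic i, d j ≤ 0) :
    ∑ i, c i * d i ≤ 0 := by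
  cases n with
  | zero => simp
  | succ n =>
    have hsum : ∑ i, d i ≤ 0 := by simpa only [← top_eq_last, Iic_top] using hd (last n)
    exact (sum_mul_le_mul_sum_of_antitone_of_sum_Iic_nonpos hc hd).trans
      (mul_nonpos_of_nonneg_of_nonpos (hc₀ _) hsum)

end Fin

namespace Real

theorem log_sub_log_le_sub_div {x y : ℝ} (hx : 0 < x) (hy : 0 < y) :
    log y - log x ≤ (y - x) / x := by
  rw [← log_div hy.ne' hx.ne', sub_div, div_self hx.ne']
  exact log_le_sub_one_of_pos (div_pos hy hx)

theorem log_sub_log_lt_sub_div {x y : ℝ} (hx : 0 < x) (hy : 0 < y) (hxy : y ≠ x) :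
    log y - log x < (y - x) / x := by
  rw [← log_div hy.ne' hx.ne', sub_div, div_self hx.ne']
  exact log_lt_sub_one_of_pos (div_pos hy hx) (div_ne_one_of_ne hxy)

end Real

theorem log_sum_lt_of_weak_supermajorize_general {n : ℕ} (x y : Fin n → ℝ)
    (hxpos : ∀ i, 0 < x i) (hypos : ∀ i, 0 < y i)
    (hxmono : Monotone x)
    (hsuper : ∀ i : Fin n, ∑ j ∈ Finset.Iic i, y j ≤ ∑ j ∈ Finset.Iic i, x j)
    (hnoperm : ¬ ∃ e : Equiv.Perm (Fin n), x = y ∘ e) :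
    ∑ i, Real.log (y i) < ∑ i, Real.log (x i) := by
  obtain ⟨i₀, hi₀⟩ : ∃ i, y i ≠ x i := by
    by_contra! h
    exact hnoperm ⟨Equiv.refl _, funext fun i => (h i).symm⟩
  have hweighted : ∑ i, (x i)⁻¹ * (y i - x i) ≤ 0 :=
    Fin.sum_mul_nonpos_of_antitone_of_sum_Iic_nonpos
      (fun i j hij => inv_anti₀ (hxpos i) (hxmono hij)) (fun i => (inv_pos.2 (hxpos i)).le)
      (fun i => by rw [sum_sub_distrib]; exact sub_nonpos.2 (hsuper i))
  have hlog : ∑ i, (Real.log (y i) - Real.log (x i)) < ∑ i, (x i)⁻¹ * (y i - x i) := by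
    simp only [inv_mul_eq_div]
    exact sum_lt_sum (fun i _ => Real.log_sub_log_le_sub_div (hxpos i) (hypos i))
      ⟨i₀, mem_univ _, Real.log_sub_log_lt_sub_div (hxpos i₀) (hypos i₀) hi₀⟩
  rw [sum_sub_distrib] at hlog
  linarith

/-- Lemma 6 (log-sum under weak supermajorization): for strictly positive vectors
`x, y ∈ ℝⁿ` written in non-decreasing order, if `y` weakly supermajorizes `x`
(all partial sums of `y` are at most the corresponding partial sums of `x`)
and `x` is not a permutation of `y`, then `∑ log yᵢ < ∑ log xᵢ`. -/
theorem log_sum_lt_of_weak_supermajorize {n : ℕ} (x y : Fin n → ℝ)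
    (hxpos : ∀ i, 0 < x i) (hypos : ∀ i, 0 < y i)
    (hxmono : Monotone x) (hymono : Monotone y)
    (hsuper : ∀ i : Fin n, ∑ j ∈ Finset.Iic i, y j ≤ ∑ j ∈ Finset.Iic i, x j)
    (hnoperm : ¬ ∃ e : Equiv.Perm (Fin n), x = y ∘ e) :
    ∑ i, Real.log (y i) < ∑ i, Real.log (x i) :=
  log_sum_lt_of_weak_supermajorize_general x y hxpos hypos hxmono hsuper hnoperm
end

section
/- Fix integers q, r ≥ 2. Every integer n ≥ q has a unique decomposition n = s·k_p + (r−s)·k_{p+1} + b, where k_0 = 0 and k_p = (q−1)·r^{p−1} for p ≥ 1, with integers satisfying 1 ≤ s ≤ r, p ≥ 0, and 0 ≤ b < k_{p+1} − k_p. -/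
/-!
Put `j_p = k_{p+1} - k_p` and `d = r - s`. Then `s k_p + (r - s) k_{p+1} + b = r k_p + d j_p + b`,
and as `d` ranges over `[0, r)` and `b` over `[0, j_p)` this takes every value of the interval
`[r k_p, r k_{p+1})` exactly once, by division with remainder by `j_p`. Since `k` is strictly
increasing with `k_0 = 0`, these intervals partition `ℕ`, which determines `p`.
-/

/-- In the decomposition lemma, `k 0 = 0` and `k p = (q-1)·r^(p-1)` for `p ≥ 1`. -/
def decompK (q r : ℕ) (p : ℕ) : ℕ := if p = 0 then 0 else (q - 1) * r ^ (p - 1)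

theorem StrictMono.existsUnique_mem_Ico_succ {K : ℕ → ℕ} (hK : StrictMono K) (h0 : K 0 = 0)
    (n : ℕ) : ∃! p, n ∈ Set.Ico (K p) (K (p + 1)) := by
  have hex : ∃ p, n < K (p + 1) := ⟨n, Nat.lt_of_lt_of_le n.lt_succ_self (hK.id_le _)⟩
  refine ⟨Nat.find hex, ⟨?_, Nat.find_spec hex⟩, ?_⟩
  · rcases h : Nat.find hex with _ | p
    · simp [h0]
    · exact not_lt.1 (Nat.find_min hex (h ▸ p.lt_succ_self))
  · rintro p ⟨hlo, hhi⟩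
    refine le_antisymm ?_ (Nat.find_min' hex hhi)
    by_contra! hlt
    exact (Nat.find_spec hex).not_ge (hlo.trans' (hK.monotone hlt))

theorem Nat.mul_add_sub_mul_of_le {a c : ℕ} (hac : a ≤ c) {s r : ℕ} (hsr : s ≤ r) :
    s * a + (r - s) * c = r * a + (r - s) * (c - a) := by
  obtain ⟨d, rfl⟩ := Nat.exists_eq_add_of_le hsr
  obtain ⟨e, rfl⟩ := Nat.exists_eq_add_of_le hac
  simp only [Nat.add_sub_cancel_left]
  ring

theorem Nat.mul_add_lt_mul {d r b j : ℕ} (hd : d < r) (hb : b < j) : d * j + b < r * j :=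
  calc d * j + b < (d + 1) * j := by rw [Nat.succ_mul]; omega
    _ ≤ r * j := Nat.mul_le_mul_right j hd

theorem StrictMono.existsUnique_decomposition {k : ℕ → ℕ} (hk : StrictMono k) (h0 : k 0 = 0)
    {r : ℕ} (hr : 0 < r) (n : ℕ) :
    ∃! t : ℕ × ℕ × ℕ, 1 ≤ t.2.1 ∧ t.2.1 ≤ r ∧ t.2.2 < k (t.1 + 1) - k t.1 ∧
      n = t.2.1 * k t.1 + (r - t.2.1) * k (t.1 + 1) + t.2.2 := by
  have hval : ∀ {p s b}, s ≤ r →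
      s * k p + (r - s) * k (p + 1) + b = r * k p + ((r - s) * (k (p + 1) - k p) + b) :=
    fun hsr => by rw [Nat.mul_add_sub_mul_of_le (hk.monotone (Nat.le_succ _)) hsr, add_assoc]
  have hnext : ∀ p, r * k (p + 1) = r * k p + r * (k (p + 1) - k p) := fun p => by
    rw [← Nat.mul_add, Nat.add_sub_cancel' (hk.monotone p.le_succ)]
  obtain ⟨p, ⟨hlo, hhi⟩, hp_unique⟩ :=
    (hk.const_mul hr).existsUnique_mem_Ico_succ (by simp [h0]) n
  obtain ⟨m, rfl⟩ := Nat.exists_eq_add_of_le hlo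
  obtain ⟨j, hj_def⟩ : ∃ j, k (p + 1) - k p = j := ⟨_, rfl⟩
  have hj : 0 < j := hj_def ▸ Nat.sub_pos_of_lt (hk p.lt_succ_self)
  have hm : m < r * j := by
    have := hj_def ▸ hnext p
    omega
  have hmj : m / j < r := Nat.div_lt_of_lt_mul (by rwa [mul_comm])
  refine ⟨(p, r - m / j, m % j), ⟨?_, ?_, ?_, ?_⟩, ?_⟩ <;> dsimp only
  · exact Nat.sub_pos_of_lt hmj
  · exact Nat.sub_le _ _
  · exact hj_def.symm ▸ Nat.mod_lt _ hj
  · rw [hval (Nat.sub_le _ _), hj_def, Nat.sub_sub_self hmj.le, Nat.div_add_mod']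
  · rintro ⟨p', s, b⟩ ⟨hs1, hsr, hb, hn⟩
    dsimp only at hs1 hsr hb hn ⊢
    rw [hval hsr] at hn
    have hmem : r * k p + m ∈ Set.Ico (r * k p') (r * k (p' + 1)) :=
      ⟨hn ▸ Nat.le_add_right _ _, hn ▸ hnext p' ▸
        Nat.add_lt_add_left (Nat.mul_add_lt_mul (Nat.sub_lt_self hs1 hsr) hb) (r * k p')⟩
    obtain rfl : p' = p := hp_unique p' hmem
    rw [hj_def] at hb hn
    obtain ⟨hd, rfl⟩ := (Nat.div_mod_unique (a := m) (d := r - s) hj).2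
      ⟨by rw [Nat.add_left_cancel hn]; ring, hb⟩
    exact Prod.ext rfl (Prod.ext (by rw [hd, Nat.sub_sub_self hsr]) rfl)

theorem decompK_zero (q r : ℕ) : decompK q r 0 = 0 := rfl

theorem decompK_succ (q r p : ℕ) : decompK q r (p + 1) = (q - 1) * r ^ p := by
  simp [decompK]

theorem decompK_strictMono {q r : ℕ} (hq : 1 < q) (hr : 1 < r) : StrictMono (decompK q r) := by
  refine strictMono_nat_of_lt_succ fun p => ?_
  rw [decompK_succ]
  rcases p with _ | p
  · simpa [decompK_zero] using Nat.sub_pos_of_lt hq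
  · rw [decompK_succ]
    exact Nat.mul_lt_mul_of_pos_left (Nat.pow_lt_pow_right hr p.lt_succ_self) (Nat.sub_pos_of_lt hq)

theorem unique_decomposition_general (q r : ℕ) (hq : 2 ≤ q) (hr : 2 ≤ r)
    (n : ℕ) :
    ∃! t : ℕ × ℕ × ℕ,
      1 ≤ t.2.1 ∧ t.2.1 ≤ r ∧
      t.2.2 < decompK q r (t.1 + 1) - decompK q r t.1 ∧
      n = t.2.1 * decompK q r t.1 + (r - t.2.1) * decompK q r (t.1 + 1) + t.2.2 :=
  (decompK_strictMono hq hr).existsUnique_decomposition (decompK_zero q r) (by omega) n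

/-- Lemma 10 of Dickey--Rosenberg: for fixed `q, r ≥ 2`, every `n ≥ q` has a
unique decomposition `n = s·k_p + (r−s)·k_{p+1} + b` with `p ≥ 0`, `1 ≤ s ≤ r`,
`0 ≤ b < k_{p+1} − k_p`. -/
theorem unique_decomposition (q r : ℕ) (hq : 2 ≤ q) (hr : 2 ≤ r)
    (n : ℕ) (hn : q ≤ n) :
    ∃! t : ℕ × ℕ × ℕ,
      1 ≤ t.2.1 ∧ t.2.1 ≤ r ∧
      t.2.2 < decompK q r (t.1 + 1) - decompK q r t.1 ∧
      n = t.2.1 * decompK q r t.1 + (r - t.2.1) * decompK q r (t.1 + 1) + t.2.2 :=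
  unique_decomposition_general q r hq hr n
end

section
/- Fix r ≥ 2. A non-decreasing finite sequence σ of positive integers is called normal if there exists k ≥ 0 such that every element lies in [r^k, r^{k+1}] and at most one element is not a power of r. If σ is normal and has length at least r, then the r-merge M_r(σ) (delete the first r elements and insert their sum, keeping the sequence non-decreasing) is also normal. -/
/-!
Split `σ = t ++ d` with `t` the `r` smallest entries, so that `M_r(σ)` is a permutation of
`t.sum :: d` and `r^(k+1) ≤ t.sum ≤ r^(k+2)`. If every entry of `d` equals `r^(k+1)`, the merged
sequence is normal with exponent `k + 1`. Otherwise some `y ∈ d` lies in `[r^k, r^(k+1))`; since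
`x ≤ y` for `x ∈ t` and at most one of `x`, `y` is not a power of `r`, every `x ∈ t` equals `r^k`.
Then `t.sum = r^(k+1)` is a power of `r` and the merged sequence is normal with exponent `k`.
-/

attribute [local instance] Classical.propDecidable

/-- The r-merge operator: delete the first `r` elements of a non-decreasing
sequence and insert their sum in the appropriate position. -/
def rMerge (r : ℕ) (σ : List ℕ) : List ℕ :=
  List.orderedInsert (· ≤ ·) ((σ.take r).sum) (σ.drop r)

/-- `x` is a power of `r` (with `1 = r^0` counted as a power of `r`). -/
def IsPowerOf (r x : ℕ) : Prop := ∃ j : ℕ, x = r ^ j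

/-- A finite non-decreasing sequence of positive integers is *normal* if for
some `k ≥ 0` all its elements lie in `[r^k, r^(k+1)]` and at most one element
is not a power of `r`. -/
def IsNormalSeq (r : ℕ) (σ : List ℕ) : Prop :=
  ∃ k : ℕ, (∀ x ∈ σ, r ^ k ≤ x ∧ x ≤ r ^ (k + 1)) ∧
    (σ.countP (fun x => decide (¬ IsPowerOf r x))) ≤ 1

theorem IsPowerOf.eq_pow_of_lt {r k x : ℕ} (hr : 1 < r) (hx : IsPowerOf r x)
    (hkx : r ^ k ≤ x) (hxk : x < r ^ (k + 1)) : x = r ^ k := by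
  obtain ⟨j, rfl⟩ := hx
  have hkj : k ≤ j := (pow_le_pow_iff_right₀ hr).mp hkx
  have hjk : j < k + 1 := (pow_lt_pow_iff_right₀ hr).mp hxk
  rw [show j = k by omega]

theorem countP_not_isPowerOf_cons_of_isPowerOf {r s : ℕ} (hs : IsPowerOf r s) (l : List ℕ) :
    (s :: l).countP (fun x => decide (¬ IsPowerOf r x)) =
      l.countP (fun x => decide (¬ IsPowerOf r x)) := by
  simp [hs]

theorem isPowerOf_or_isPowerOf_of_countP_append_le_one {r x y : ℕ} {t d : List ℕ}
    (hcount : (t ++ d).countP (fun x => decide (¬ IsPowerOf r x)) ≤ 1)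
    (hx : x ∈ t) (hy : y ∈ d) : IsPowerOf r x ∨ IsPowerOf r y := by
  by_contra! h
  have ht : 0 < t.countP (fun x => decide (¬ IsPowerOf r x)) :=
    List.countP_pos_iff.mpr ⟨x, hx, by simpa using h.1⟩
  have hd : 0 < d.countP (fun x => decide (¬ IsPowerOf r x)) :=
    List.countP_pos_iff.mpr ⟨y, hy, by simpa using h.2⟩
  rw [List.countP_append] at hcount
  omega

theorem IsNormalSeq.of_perm {r : ℕ} {l₁ l₂ : List ℕ} (h : l₁.Perm l₂) (hl₁ : IsNormalSeq r l₁) :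
    IsNormalSeq r l₂ := by
  obtain ⟨k, hbound, hcount⟩ := hl₁
  exact ⟨k, fun x hx => hbound x (h.mem_iff.mpr hx), h.countP_eq _ ▸ hcount⟩

section MergeOfSplit

variable {r k : ℕ} {t d : List ℕ}

theorem sum_mem_Icc_of_forall_mem_Icc (ht : t.length = r)
    (hbound : ∀ x ∈ t, x ∈ Set.Icc (r ^ k) (r ^ (k + 1))) :
    t.sum ∈ Set.Icc (r ^ (k + 1)) (r ^ (k + 2)) := by
  have hlow := t.card_nsmul_le_sum (r ^ k) fun x hx => (hbound x hx).1
  have hup := t.sum_le_card_nsmul (r ^ (k + 1)) fun x hx => (hbound x hx).2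
  rw [ht, smul_eq_mul] at hlow hup
  exact ⟨by rwa [pow_succ'], by rwa [pow_succ' r (k + 1)]⟩

theorem isNormalSeq_sum_cons_of_forall_eq (hr : 0 < r) (ht : t.length = r)
    (hbound : ∀ x ∈ t, r ^ k ≤ x ∧ x ≤ r ^ (k + 1)) (hd : ∀ y ∈ d, y = r ^ (k + 1)) :
    IsNormalSeq r (t.sum :: d) := by
  refine ⟨k + 1, ?_, ?_⟩
  · rintro x (_ | ⟨_, hx⟩)
    · exact sum_mem_Icc_of_forall_mem_Icc ht hbound
    · rw [hd x hx]
      exact ⟨le_rfl, Nat.pow_le_pow_right hr (k + 1).le_succ⟩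
  · have hd0 : d.countP (fun x => decide (¬ IsPowerOf r x)) = 0 :=
      List.countP_eq_zero.mpr fun y hy => by simpa using ⟨k + 1, hd y hy⟩
    rw [List.countP_cons, hd0]
    split <;> omega

theorem isNormalSeq_sum_cons_of_lt {y : ℕ} (hr : 1 < r) (ht : t.length = r)
    (hbound : ∀ x ∈ t ++ d, r ^ k ≤ x ∧ x ≤ r ^ (k + 1))
    (hcount : (t ++ d).countP (fun x => decide (¬ IsPowerOf r x)) ≤ 1)
    (hsort : ∀ x ∈ t, ∀ y ∈ d, x ≤ y) (hy : y ∈ d) (hyk : y < r ^ (k + 1)) :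
    IsNormalSeq r (t.sum :: d) := by
  have hky : r ^ k ≤ y := (hbound y (List.mem_append_right t hy)).1
  have ht_eq : ∀ x ∈ t, x = r ^ k := by
    intro x hx
    have hkx : r ^ k ≤ x := (hbound x (List.mem_append_left d hx)).1
    have hxy : x ≤ y := hsort x hx y hy
    rcases isPowerOf_or_isPowerOf_of_countP_append_le_one hcount hx hy with hxp | hyp
    · exact hxp.eq_pow_of_lt hr hkx (hxy.trans_lt hyk)
    · exact le_antisymm (hxy.trans_eq (hyp.eq_pow_of_lt hr hky hyk)) hkx
  have hsum : t.sum = r ^ (k + 1) := by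
    rw [t.sum_eq_card_nsmul _ ht_eq, ht, smul_eq_mul, pow_succ']
  refine ⟨k, ?_, ?_⟩
  · rintro x (_ | ⟨_, hx⟩)
    · rw [hsum]
      exact ⟨Nat.pow_le_pow_right (by omega) k.le_succ, le_rfl⟩
    · exact hbound x (List.mem_append_right t hx)
  · rw [countP_not_isPowerOf_cons_of_isPowerOf ⟨k + 1, hsum⟩]
    exact (List.sublist_append_right t d).countP_le.trans hcount

end MergeOfSplit

theorem rMerge_normal_general (r : ℕ) (hr : 2 ≤ r) (σ : List ℕ)
    (hsort : List.Pairwise (· ≤ ·) σ)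
    (hlen : r ≤ σ.length) (hnorm : IsNormalSeq r σ) :
    IsNormalSeq r (rMerge r σ) := by
  obtain ⟨k, hbound, hcount⟩ := hnorm
  refine IsNormalSeq.of_perm (List.perm_orderedInsert _ _ _).symm ?_
  have ht : (σ.take r).length = r := List.length_take_of_le hlen
  rw [← List.take_append_drop r σ] at hsort hbound hcount
  by_cases hd : ∃ y ∈ σ.drop r, y < r ^ (k + 1)
  · obtain ⟨y, hy, hyk⟩ := hd
    exact isNormalSeq_sum_cons_of_lt hr ht hbound hcount (List.pairwise_append.mp hsort).2.2 hy hyk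
  · push Not at hd
    refine isNormalSeq_sum_cons_of_forall_eq (by omega) ht
      (fun x hx => hbound x (List.mem_append_left _ hx)) fun y hy => ?_
    exact le_antisymm (hbound y (List.mem_append_right _ hy)).2 (hd y hy)

/-- If `σ` is a normal non-decreasing sequence of positive integers of length
at least `r`, then its r-merge is also normal. -/
theorem rMerge_normal (r : ℕ) (hr : 2 ≤ r) (σ : List ℕ)
    (hsort : List.Pairwise (· ≤ ·) σ) (hpos : ∀ x ∈ σ, 0 < x)
    (hlen : r ≤ σ.length) (hnorm : IsNormalSeq r σ) :
    IsNormalSeq r (rMerge r σ) :=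
  rMerge_normal_general r hr σ hsort hlen hnorm
end

section
/- Fix r ≥ 2 and let n = w(r−1)+1 with w ≥ 1. Let σ = M_r^{w−1}(1^n) be the result of applying w−1 r-merge operations to the all-ones sequence of length n; σ has length r. Writing the unique decomposition n = s·r^{p−1} + (r−s)·r^p + b (with p ≥ 1, 1 ≤ s ≤ r, 0 ≤ b < r^p − r^{p−1}), the multiset of elements of σ consists of exactly s−1 copies of r^{p−1}, one element equal to r^{p−1} + b, and r−s copies of r^p. -/
attribute [local instance] Classical.propDecidable

/-!
Call a list *normal-shaped* if it reads `x, …, x, m, r x, …, r x` with `x = r ^ k` and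
`x ≤ m < r x`. An `r`-merge of such a list of length at least `r` is again normal-shaped: if
`r` copies of `x` lead, they merge into `r x`; otherwise the `r` smallest elements sum to a value
in `[r x, r² x)` and only copies of `r x` remain. A merge keeps the sum and shortens the list by
`r - 1`, so `w - 1` merges turn `1ⁿ` into a normal-shaped list of length `r` and sum `n`. Such a
list is determined by its sum `S`: `k` is read off from `r ^ (k + 1) ≤ S < r ^ (k + 2)`, and the
rest from dividing `S - x` by `(r - 1) x`.
-/

namespace List

-- An arbitrary decidability instance, so that these apply to `rMerge`, which is elaborated with
-- `Classical.propDecidable`.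
variable {α : Type*} [LinearOrder α] [DecidableRel (α := α) (· ≤ ·)]

theorem orderedInsert_append_of_forall_lt {x : α} {l₁ : List α} (l₂ : List α)
    (h : ∀ z ∈ l₁, z < x) :
    (l₁ ++ l₂).orderedInsert (· ≤ ·) x = l₁ ++ l₂.orderedInsert (· ≤ ·) x := by
  induction l₁ with
  | nil => rfl
  | cons z l₁ ih =>
    rw [cons_append, orderedInsert_of_not_le _ _ (not_le.2 (h z mem_cons_self)),
      ih fun y hy => h y (mem_cons_of_mem z hy), cons_append]

theorem orderedInsert_replicate_self (x : α) (n : ℕ) :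
    (replicate n x).orderedInsert (· ≤ ·) x = replicate (n + 1) x := by
  cases n with
  | zero => rfl
  | succ n => rw [replicate_succ, orderedInsert_cons_of_le _ _ le_rfl, ← replicate_succ,
      ← replicate_succ]

theorem orderedInsert_replicate_of_le {x y : α} (h : y ≤ x) (n : ℕ) :
    (replicate n y).orderedInsert (· ≤ ·) x = replicate n y ++ [x] := by
  rcases h.lt_or_eq with hlt | rfl
  · simpa using orderedInsert_append_of_forall_lt [] (l₁ := replicate n y)
      fun z hz => eq_of_mem_replicate hz ▸ hlt
  · rw [orderedInsert_replicate_self, replicate_succ']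

end List

theorem length_rMerge (r : ℕ) (σ : List ℕ) : (rMerge r σ).length = σ.length - r + 1 := by
  simp [rMerge, List.orderedInsert_length]

theorem sum_rMerge (r : ℕ) (σ : List ℕ) : (rMerge r σ).sum = σ.sum := by
  rw [rMerge, (List.perm_orderedInsert _ _ _).sum_eq, List.sum_cons, List.sum_take_add_sum_drop]

theorem sum_iterate_rMerge (r j : ℕ) (σ : List ℕ) : ((rMerge r)^[j] σ).sum = σ.sum := by
  induction j generalizing σ with
  | zero => rfl
  | succ j ih => rw [Function.iterate_succ_apply, ih, sum_rMerge]

theorem length_iterate_rMerge {r m j : ℕ} {σ : List ℕ} (hr : 1 ≤ r) (hm : 1 ≤ m)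
    (hσ : σ.length = m + j * (r - 1)) : ((rMerge r)^[j] σ).length = m := by
  induction j generalizing σ with
  | zero => simpa using hσ
  | succ j ih =>
    rw [Function.iterate_succ_apply]
    apply ih
    rw [length_rMerge, hσ, Nat.succ_mul]
    omega

def normalSeq (r k a m d : ℕ) : List ℕ :=
  List.replicate a (r ^ k) ++ m :: List.replicate d (r ^ (k + 1))

/-- The sorted normal sequences; `m` is the element that need not be a power of `r`. -/
def HasNormalShape (r : ℕ) (σ : List ℕ) : Prop :=
  ∃ k a m d, r ^ k ≤ m ∧ m < r ^ (k + 1) ∧ σ = normalSeq r k a m d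

theorem length_normalSeq (r k a m d : ℕ) : (normalSeq r k a m d).length = a + 1 + d := by
  simp [normalSeq]
  omega

theorem sum_normalSeq (r k a m d : ℕ) :
    (normalSeq r k a m d).sum = a * r ^ k + m + d * r ^ (k + 1) := by
  simp [normalSeq, List.sum_replicate]
  ring

theorem coe_normalSeq (r k a m d : ℕ) : (normalSeq r k a m d : Multiset ℕ) =
    Multiset.replicate a (r ^ k) + {m} + Multiset.replicate d (r ^ (k + 1)) := by
  rw [normalSeq, add_assoc, Multiset.singleton_add, ← Multiset.coe_replicate,
    ← Multiset.coe_replicate, Multiset.cons_coe, Multiset.coe_add]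

theorem sum_normalSeq_of_length_eq {r k a m d : ℕ} (hl : a + 1 + d = r) :
    (normalSeq r k a m d).sum = (d + 1) * ((r - 1) * r ^ k) + m := by
  subst hl
  rw [sum_normalSeq, show a + 1 + d - 1 = a + d by omega, pow_succ]
  ring

theorem pow_succ_eq_sub_one_mul_add {r : ℕ} (hr : 1 ≤ r) (k : ℕ) :
    r ^ (k + 1) = (r - 1) * r ^ k + r ^ k := by
  rw [pow_succ, ← Nat.succ_mul, Nat.succ_eq_add_one, Nat.sub_add_cancel hr, mul_comm]

theorem sum_normalSeq_mem_Ico {r k a m d : ℕ} (hl : a + 1 + d = r) (hm₁ : r ^ k ≤ m)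
    (hm₂ : m < r ^ (k + 1)) :
    (normalSeq r k a m d).sum ∈ Set.Ico (r ^ (k + 1)) (r ^ (k + 2)) := by
  have hr : 1 < r := one_lt_of_lt_mul_right (hm₁.trans_lt hm₂)
  have hpow := pow_succ_eq_sub_one_mul_add hr.le k
  have hpow₂ : r ^ (k + 2) = r * ((r - 1) * r ^ k) + r ^ (k + 1) := by
    rw [pow_succ' _ (k + 1)]
    nth_rw 1 [hpow]
    ring
  rw [Set.mem_Ico, sum_normalSeq_of_length_eq hl]
  have hd : (d + 1) * ((r - 1) * r ^ k) ≤ r * ((r - 1) * r ^ k) :=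
    Nat.mul_le_mul_right _ (by omega)
  constructor
  · nlinarith
  · omega

theorem rMerge_normalSeq_of_le {r k e m d : ℕ} (hm₁ : r ^ k ≤ m) (hm₂ : m < r ^ (k + 1)) :
    rMerge r (normalSeq r k (r + e) m d) = normalSeq r k e m (d + 1) := by
  have hsplit : normalSeq r k (r + e) m d = List.replicate r (r ^ k) ++ normalSeq r k e m d := by
    rw [normalSeq, normalSeq, List.replicate_add, List.append_assoc]
  have hlen : (List.replicate r (r ^ k)).length = r := List.length_replicate
  have hsum : (List.replicate r (r ^ k)).sum = r ^ (k + 1) := by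
    rw [List.sum_replicate, smul_eq_mul, pow_succ']
  have hlow : ∀ z ∈ List.replicate e (r ^ k) ++ [m], z < r ^ (k + 1) := by
    simp only [List.mem_append, List.mem_replicate, List.mem_singleton]
    rintro z (⟨-, rfl⟩ | rfl) <;> omega
  rw [rMerge, hsplit, List.take_left' hlen, List.drop_left' hlen, hsum, normalSeq,
    ← List.singleton_append, ← List.append_assoc, List.orderedInsert_append_of_forall_lt _ hlow,
    List.orderedInsert_replicate_self, normalSeq, List.append_assoc, List.singleton_append]

theorem rMerge_normalSeq_of_lt {r k a m u D : ℕ} (hl : a + 1 + u = r) (hm₁ : r ^ k ≤ m)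
    (hm₂ : m < r ^ (k + 1)) :
    rMerge r (normalSeq r k a m (u + D)) = normalSeq r (k + 1) D (normalSeq r k a m u).sum 0 := by
  have hsplit : normalSeq r k a m (u + D) =
      normalSeq r k a m u ++ List.replicate D (r ^ (k + 1)) := by
    simp only [normalSeq, List.replicate_add, List.append_assoc, List.cons_append]
  have hlen : (normalSeq r k a m u).length = r := (length_normalSeq r k a m u).trans hl
  rw [rMerge, hsplit, List.take_left' hlen, List.drop_left' hlen,
    List.orderedInsert_replicate_of_le (sum_normalSeq_mem_Ico hl hm₁ hm₂).1]
  simp [normalSeq]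

theorem hasNormalShape_rMerge {r : ℕ} {σ : List ℕ} (hσ : HasNormalShape r σ)
    (hl : r ≤ σ.length) : HasNormalShape r (rMerge r σ) := by
  obtain ⟨k, a, m, d, hm₁, hm₂, rfl⟩ := hσ
  rw [length_normalSeq] at hl
  by_cases ha : r ≤ a
  · obtain ⟨e, rfl⟩ := Nat.exists_eq_add_of_le ha
    exact ⟨k, e, m, d + 1, hm₁, hm₂, rMerge_normalSeq_of_le hm₁ hm₂⟩
  · obtain ⟨u, D, hu, rfl⟩ : ∃ u D, a + 1 + u = r ∧ d = u + D :=
      ⟨r - (a + 1), d - (r - (a + 1)), by omega, by omega⟩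
    have hmerged := sum_normalSeq_mem_Ico hu hm₁ hm₂
    exact ⟨k + 1, D, _, 0, hmerged.1, hmerged.2, rMerge_normalSeq_of_lt hu hm₁ hm₂⟩

theorem hasNormalShape_iterate_rMerge {r j : ℕ} {σ : List ℕ} (hσ : HasNormalShape r σ)
    (hl : r + j * (r - 1) ≤ σ.length) : HasNormalShape r ((rMerge r)^[j] σ) := by
  induction j generalizing σ with
  | zero => exact hσ
  | succ j ih =>
    rw [Function.iterate_succ_apply]
    refine ih (hasNormalShape_rMerge hσ (by omega)) ?_
    rw [length_rMerge]
    rw [Nat.succ_mul] at hl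
    omega

theorem hasNormalShape_replicate_one {r n : ℕ} (hr : 2 ≤ r) (hn : 1 ≤ n) :
    HasNormalShape r (List.replicate n 1) := by
  obtain ⟨n, rfl⟩ := Nat.exists_eq_add_of_le' hn
  exact ⟨0, n, 1, 0, by simp, by simp; omega, by simp [normalSeq, List.replicate_succ']⟩

theorem HasNormalShape.eq_of_sum_eq {r : ℕ} {σ τ : List ℕ} (hσ : HasNormalShape r σ)
    (hτ : HasNormalShape r τ) (hσl : σ.length = r) (hτl : τ.length = r)
    (h : σ.sum = τ.sum) : σ = τ := by
  obtain ⟨k, a, m, d, hm₁, hm₂, rfl⟩ := hσ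
  obtain ⟨k', a', m', d', hm₁', hm₂', rfl⟩ := hτ
  rw [length_normalSeq] at hσl hτl
  have hlog := Nat.log_eq_of_pow_le_of_lt_pow (sum_normalSeq_mem_Ico hσl hm₁ hm₂).1
    (sum_normalSeq_mem_Ico hσl hm₁ hm₂).2
  have hlog' := Nat.log_eq_of_pow_le_of_lt_pow (sum_normalSeq_mem_Ico hτl hm₁' hm₂').1
    (sum_normalSeq_mem_Ico hτl hm₁' hm₂').2
  obtain rfl : k = k' := by rw [h] at hlog; omega
  rw [sum_normalSeq_of_length_eq hσl, sum_normalSeq_of_length_eq hτl] at h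
  have hr : 1 < r := one_lt_of_lt_mul_right (hm₁.trans_lt hm₂)
  have hpow := pow_succ_eq_sub_one_mul_add hr.le k
  have hM : 0 < (r - 1) * r ^ k := Nat.mul_pos (by omega) (by positivity)
  generalize (r - 1) * r ^ k = M at h hpow hM
  have hdiv := (Nat.div_mod_unique hM).2 (⟨by rw [mul_comm]; omega, by omega⟩ :
    m - r ^ k + M * (d + 1) = (d + 1) * M + m - r ^ k ∧ m - r ^ k < M)
  have hdiv' := (Nat.div_mod_unique hM).2 (⟨by rw [mul_comm]; omega, by omega⟩ :
    m' - r ^ k + M * (d' + 1) = (d' + 1) * M + m' - r ^ k ∧ m' - r ^ k < M)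
  rw [h] at hdiv
  obtain rfl : d = d' := by omega
  obtain rfl : m = m' := by omega
  obtain rfl : a = a' := by omega
  rfl

/-- Applying `w − 1` r-merges to the all-ones sequence of length
`n = w(r−1)+1` yields a length-`r` sequence whose multiset of elements
consists of `s−1` copies of `r^(p−1)`, one element `r^(p−1)+b`, and `r−s`
copies of `r^p`, where `n = s·r^(p−1) + (r−s)·r^p + b` is the unique
decomposition with `p ≥ 1`, `1 ≤ s ≤ r`, `0 ≤ b < r^p − r^(p−1)`. -/
theorem rMerge_iterate_ones (r : ℕ) (hr : 2 ≤ r) (w : ℕ) (hw : 1 ≤ w)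
    (n : ℕ) (hn : n = w * (r - 1) + 1)
    (p s b : ℕ) (hp : 1 ≤ p) (hs₁ : 1 ≤ s) (hs₂ : s ≤ r)
    (hb : b < r ^ p - r ^ (p - 1))
    (hdecomp : n = s * r ^ (p - 1) + (r - s) * r ^ p + b) :
    ((rMerge r)^[w - 1] (List.replicate n 1)).length = r ∧
    (((rMerge r)^[w - 1] (List.replicate n 1) : Multiset ℕ) =
      Multiset.replicate (s - 1) (r ^ (p - 1)) + {r ^ (p - 1) + b} +
        Multiset.replicate (r - s) (r ^ p)) := by
  obtain ⟨k, rfl⟩ := Nat.exists_eq_add_of_le' hp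
  obtain ⟨t, rfl⟩ := Nat.exists_eq_add_of_le' hs₁
  simp only [Nat.add_sub_cancel] at hb hdecomp ⊢
  have hlen : (List.replicate n 1).length = r + (w - 1) * (r - 1) := by
    rw [List.length_replicate, hn]
    obtain ⟨v, rfl⟩ := Nat.exists_eq_add_of_le' hw
    rw [Nat.add_sub_cancel, Nat.succ_mul]
    omega
  set σ := (rMerge r)^[w - 1] (List.replicate n 1)
  have hσ : HasNormalShape r σ :=
    hasNormalShape_iterate_rMerge (hasNormalShape_replicate_one hr (by omega)) hlen.ge
  have hσl : σ.length = r := length_iterate_rMerge (by omega) (by omega) hlen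
  have hτ : HasNormalShape r (normalSeq r k t (r ^ k + b) (r - (t + 1))) :=
    ⟨k, t, _, _, by omega, by omega, rfl⟩
  have hστ : σ = normalSeq r k t (r ^ k + b) (r - (t + 1)) := by
    refine hσ.eq_of_sum_eq hτ hσl (by rw [length_normalSeq]; omega) ?_
    rw [sum_iterate_rMerge, List.sum_replicate, smul_eq_mul, mul_one, sum_normalSeq, hdecomp]
    ring
  rw [hστ, length_normalSeq, coe_normalSeq]
  exact ⟨by omega, rfl⟩
end

section
/- Fix r ≥ 2 and k ≥ 1, and let n = r^k. Among all r-furcating rooted tree shapes with n leaves, the fully symmetric r-furcating tree (in which every internal node's r subtrees are identical fully symmetric trees of the next smaller size) is the unique tree that is an H-tree constructed by the Huffman r-ary merging algorithm starting from the uniform weight vector of n ones. -/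
/-- Rooted trees with unlabeled leaves: a tree is a leaf or a list of subtrees. -/
inductive RTree : Type
  | leaf : RTree
  | node : List RTree → RTree

namespace RTree

/-- Number of leaves of a rooted tree. -/
def leaves : RTree → ℕ
  | leaf => 1
  | node ts => (ts.attach.map (fun ⟨t, _⟩ => leaves t)).sum
decreasing_by
  have := List.sizeOf_lt_of_mem ‹_›
  simp only [RTree.node.sizeOf_spec]
  omega

/-- Multiset of values `m(v)` (number of descendant leaves) over internal nodes `v`. -/
def weights : RTree → Multiset ℕ
  | leaf => 0
  | node ts => leaves (node ts) ::ₘ (ts.attach.map (fun ⟨t, _⟩ => weights t)).sum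
decreasing_by
  have := List.sizeOf_lt_of_mem ‹_›
  simp only [RTree.node.sizeOf_spec]
  omega

/-- A tree is (strictly) r-furcating if every internal node has exactly r children. -/
inductive IsRFurcating (r : ℕ) : RTree → Prop
  | leaf : IsRFurcating r .leaf
  | node (ts : List RTree) (hlen : ts.length = r)
      (hts : ∀ t ∈ ts, IsRFurcating r t) : IsRFurcating r (.node ts)

/-- The number of labeled histories of (any labeling of) an r-furcating tree,
via the recursion `N(T) = multinomial(w−1; w₁,…,w_r) ∏ N(Tᵢ)` where
`wᵢ = (|Tᵢ|−1)/(r−1)` and `w − 1 = ∑ wᵢ`. -/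
def NLH (r : ℕ) : RTree → ℕ
  | leaf => 1
  | node ts =>
      (Nat.factorial ((ts.map (fun t => (leaves t - 1) / (r - 1))).sum) /
        (ts.map (fun t => Nat.factorial ((leaves t - 1) / (r - 1)))).prod) *
      (ts.attach.map (fun ⟨t, _⟩ => NLH r t)).prod
decreasing_by
  have := List.sizeOf_lt_of_mem ‹_›
  simp only [RTree.node.sizeOf_spec]
  omega

/-- Shape equality of rooted trees: same unlabeled topology, i.e., children
lists agree up to permutation and recursive shape equality. -/
inductive SameShape : RTree → RTree → Prop
  | leaf : SameShape .leaf .leaf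
  | node {l₁ l₂ l₃ : List RTree} :
      List.Forall₂ SameShape l₁ l₂ → l₂.Perm l₃ → SameShape (.node l₁) (.node l₃)

end RTree

namespace RTree

/-- One step of the r-ary Huffman algorithm on a multiset of already-built
trees: merge `r` trees of minimal weight into a new node (with all-ones initial
leaf weights, the weight of a tree is its number of leaves). -/
inductive HuffStep (r : ℕ) : Multiset RTree → Multiset RTree → Prop
  | step (l : List RTree) (rest : Multiset RTree) (hlen : l.length = r)
      (hmin : ∀ a ∈ l, ∀ b ∈ rest, leaves a ≤ leaves b) :
      HuffStep r ((l : Multiset RTree) + rest) (RTree.node l ::ₘ rest)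

/-- `T` is an H-tree on `n` leaves for the uniform all-ones weight vector:
it can be produced by repeatedly merging `r` minimal-weight nodes starting
from `n` leaves. -/
def IsHTree (r n : ℕ) (T : RTree) : Prop :=
  Relation.ReflTransGen (HuffStep r) (Multiset.replicate n RTree.leaf) {T}

/-- The fully symmetric r-furcating tree on `r^k` leaves. -/
def fullSym (r : ℕ) : ℕ → RTree
  | 0 => .leaf
  | k + 1 => .node (List.replicate r (fullSym r k))

end RTree

/-!
Starting from `r ^ k` leaves, every state of the Huffman process consists of `c > 0` copies of
the fully symmetric tree of height `j` and `b` copies of that of height `j + 1`. The total weight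
`r ^ j * (c + b * r)` stays `r ^ k`, so `r ∣ c` while at least two trees remain: the `r` lightest
trees are then forced to be `r` copies of height `j`, and merging them gives one tree of height
`j + 1`. Hence the process never leaves this family and ends in the fully symmetric tree.
-/

lemma dvd_of_pow_mul_eq_pow {r j k x : ℕ} (hr : 2 ≤ r) (h : r ^ j * x = r ^ k) (hx : 2 ≤ x) :
    r ∣ x := by
  have hjk : j < k := by
    by_contra! hkj
    have : r ^ j * 2 ≤ r ^ j :=
      (Nat.mul_le_mul_left _ hx).trans (h ▸ Nat.pow_le_pow_right (by omega) hkj)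
    have : 0 < r ^ j := by positivity
    omega
  rw [← Nat.add_sub_cancel' hjk.le, pow_add] at h
  rw [Nat.eq_of_mul_eq_mul_left (by positivity) h]
  exact dvd_pow_self r (by omega)

namespace RTree

open Multiset

lemma leaves_node (ts : List RTree) : leaves (node ts) = (ts.map leaves).sum := by
  rw [leaves, List.map_attach_eq_pmap, List.pmap_eq_map]

lemma leaves_node_replicate (r : ℕ) (A : RTree) :
    leaves (node (List.replicate r A)) = r * leaves A := by
  simp [leaves_node]

lemma leaves_fullSym (r j : ℕ) : leaves (fullSym r j) = r ^ j := by
  induction j with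
  | zero => simp [fullSym, leaves]
  | succ j ih => rw [fullSym, leaves_node_replicate, ih, pow_succ, mul_comm]

lemma sameShape_refl : ∀ T, SameShape T T
  | .leaf => .leaf
  | .node ts => .node (List.forall₂_same.mpr fun t _ => sameShape_refl t) (List.Perm.refl ts)

def totalLeaves (s : Multiset RTree) : ℕ := (s.map leaves).sum

lemma totalLeaves_replicate (c : ℕ) (T : RTree) :
    totalLeaves (replicate c T) = c * leaves T := by
  simp [totalLeaves]

lemma totalLeaves_add (s t : Multiset RTree) :
    totalLeaves (s + t) = totalLeaves s + totalLeaves t := by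
  simp [totalLeaves]

namespace HuffStep

variable {r : ℕ} {s s' : Multiset RTree}

lemma totalLeaves_eq (h : HuffStep r s s') : totalLeaves s' = totalLeaves s := by
  cases h with
  | step l rest _ _ => simp [totalLeaves, leaves_node, add_comm]

lemma le_card (h : HuffStep r s s') : r ≤ card s := by
  cases h with
  | step l rest hlen _ => simp [hlen]

lemma eq_of_lightest {c : ℕ} {A : RTree} {M : Multiset RTree} (h : HuffStep r s s')
    (hs : s = replicate c A + M) (hrc : r ≤ c) (hM : ∀ B ∈ M, leaves A < leaves B) :
    s' = node (List.replicate r A) ::ₘ (replicate (c - r) A + M) := by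
  cases h with
  | step l rest hlen hmin =>
  have hl : ∀ x ∈ l, x = A := by
    classical
    intro x hx
    by_contra hxA
    have hxM : x ∈ M := by
      have : x ∈ replicate c A + M := hs ▸ mem_add.mpr (.inl (by simpa using hx))
      rcases mem_add.mp this with hxA' | hxM
      · exact absurd (eq_of_mem_replicate hxA') hxA
      · exact hxM
    have hcount_l : count A (l : Multiset RTree) < r := by
      have hne : count A (l : Multiset RTree) ≠ card (l : Multiset RTree) := fun heq =>
        hxA (count_eq_card.mp heq x (mem_coe.mpr hx)).symm
      have := count_le_card A (l : Multiset RTree)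
      simp only [coe_card, hlen] at hne this
      omega
    have hcount_s : c ≤ count A ((l : Multiset RTree) + rest) := by
      rw [hs, count_add, count_replicate_self]
      omega
    have hA_rest : A ∈ rest := count_pos.mp (by rw [count_add] at hcount_s; omega)
    exact absurd (hmin x hx A hA_rest) (not_le.mpr (hM x hxM))
  have hlA : l = List.replicate r A := hlen ▸ List.eq_replicate_of_mem hl
  subst hlA
  have hrest : rest = replicate (c - r) A + M := by
    apply add_left_cancel (a := replicate r A)
    rw [← coe_replicate, hs, coe_replicate, ← add_assoc, ← replicate_add,
      Nat.add_sub_cancel' hrc]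
  rw [hrest]

end HuffStep

lemma huffStep_replicate {r c : ℕ} {A : RTree} {M : Multiset RTree} (hrc : r ≤ c)
    (hM : ∀ B ∈ M, leaves A ≤ leaves B) :
    HuffStep r (replicate c A + M) (node (List.replicate r A) ::ₘ (replicate (c - r) A + M)) := by
  have hsplit :
      replicate c A + M = (List.replicate r A : Multiset RTree) + (replicate (c - r) A + M) := by
    rw [coe_replicate, ← add_assoc, ← replicate_add, Nat.add_sub_cancel' hrc]
  rw [hsplit]
  refine .step _ _ List.length_replicate fun a ha B hB => ?_
  rw [List.eq_of_mem_replicate ha]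
  rcases mem_add.mp hB with hB | hB
  · rw [eq_of_mem_replicate hB]
  · exact hM B hB

open Relation

lemma reflTransGen_merge_replicate {r : ℕ} (hr : 1 ≤ r) (A : RTree) (a b : ℕ) :
    ReflTransGen (HuffStep r) (replicate (r * a) A + replicate b (node (List.replicate r A)))
      (replicate (a + b) (node (List.replicate r A))) := by
  induction a generalizing b with
  | zero => simp [ReflTransGen.refl]
  | succ a ih =>
    have hAB : leaves A ≤ leaves (node (List.replicate r A)) := by
      rw [leaves_node_replicate]
      exact Nat.le_mul_of_pos_left _ hr
    have hstep := huffStep_replicate (c := r * (a + 1)) (Nat.le_mul_of_pos_right r (by omega))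
      (M := replicate b (node (List.replicate r A))) fun B hB => eq_of_mem_replicate hB ▸ hAB
    rw [show r * (a + 1) - r = r * a by rw [mul_add, mul_one, Nat.add_sub_cancel], ← add_cons,
      ← replicate_succ] at hstep
    rw [show a + 1 + b = a + (b + 1) by omega]
    exact .head hstep (ih (b + 1))

lemma reflTransGen_fullSym {r : ℕ} (hr : 1 ≤ r) (j m : ℕ) :
    ReflTransGen (HuffStep r) (replicate (r ^ m) (fullSym r j)) {fullSym r (j + m)} := by
  induction m generalizing j with
  | zero => exact .refl
  | succ m ih =>
    have hmerge := reflTransGen_merge_replicate hr (fullSym r j) (r ^ m) 0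
    rw [replicate_zero, add_zero, add_zero, ← fullSym, ← pow_succ'] at hmerge
    rw [← add_assoc, add_right_comm]
    exact hmerge.trans (ih (j + 1))

-- `0 < c`: once the trees of height `j` are used up, the state is read at level `j + 1`.
def IsTwoLevel (r : ℕ) (s : Multiset RTree) : Prop :=
  ∃ j c b, 0 < c ∧ s = replicate c (fullSym r j) + replicate b (fullSym r (j + 1))

namespace IsTwoLevel

variable {r : ℕ} {s s' : Multiset RTree}

lemma huffStep (hr : 2 ≤ r) {k : ℕ} (hs : IsTwoLevel r s) (hn : totalLeaves s = r ^ k)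
    (h : HuffStep r s s') : IsTwoLevel r s' := by
  obtain ⟨j, c, b, hc, rfl⟩ := hs
  have hcard := h.le_card
  rw [card_add, card_replicate, card_replicate] at hcard
  have hrc : r ≤ c := by
    refine Nat.le_of_dvd hc ((Nat.dvd_add_left (dvd_mul_left r b)).mp
      (dvd_of_pow_mul_eq_pow hr (j := j) (k := k) (x := c + b * r) ?_ (by nlinarith)))
    rw [← hn, totalLeaves_add, totalLeaves_replicate, totalLeaves_replicate, leaves_fullSym,
      leaves_fullSym, pow_succ]
    ring
  have hlight : ∀ B ∈ replicate b (fullSym r (j + 1)), leaves (fullSym r j) < leaves B := by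
    intro B hB
    rw [eq_of_mem_replicate hB, leaves_fullSym, leaves_fullSym]
    exact Nat.pow_lt_pow_right (by omega) (by omega)
  rw [h.eq_of_lightest rfl hrc hlight, ← fullSym, ← add_cons, ← replicate_succ]
  rcases hrc.lt_or_eq with hlt | rfl
  · exact ⟨j, c - r, b + 1, by omega, rfl⟩
  · exact ⟨j + 1, b + 1, 0, by omega, by simp⟩

lemma of_reflTransGen (hr : 2 ≤ r) {k : ℕ} (h : ReflTransGen (HuffStep r) s s')
    (hs : IsTwoLevel r s) (hn : totalLeaves s = r ^ k) :
    IsTwoLevel r s' ∧ totalLeaves s' = r ^ k := by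
  induction h with
  | refl => exact ⟨hs, hn⟩
  | tail _ hstep ih => exact ⟨ih.1.huffStep hr ih.2 hstep, hstep.totalLeaves_eq.trans ih.2⟩

lemma eq_fullSym_of_singleton (hr : 2 ≤ r) {k : ℕ} {T : RTree} (hT : IsTwoLevel r {T})
    (hn : totalLeaves {T} = r ^ k) : T = fullSym r k := by
  obtain ⟨j, c, b, hc, hTeq⟩ := hT
  have hcard := congrArg card hTeq
  rw [card_singleton, card_add, card_replicate, card_replicate] at hcard
  obtain ⟨rfl, rfl⟩ : c = 1 ∧ b = 0 := by omega
  rw [replicate_one, replicate_zero, add_zero, singleton_inj] at hTeq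
  subst hTeq
  rw [totalLeaves, map_singleton, sum_singleton, leaves_fullSym] at hn
  rw [Nat.pow_right_injective hr hn]

end IsTwoLevel

end RTree

open RTree in
theorem fullSym_unique_HTree_general (r : ℕ) (hr : 2 ≤ r) (k : ℕ) :
    IsHTree r (r ^ k) (fullSym r k) ∧
    ∀ T : RTree, IsHTree r (r ^ k) T → SameShape T (fullSym r k) := by
  refine ⟨by simpa [IsHTree, fullSym] using reflTransGen_fullSym (by omega : 1 ≤ r) 0 k,
    fun T hT => ?_⟩
  have hinit : IsTwoLevel r (Multiset.replicate (r ^ k) leaf) :=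
    ⟨0, r ^ k, 0, by positivity, by simp [fullSym]⟩
  obtain ⟨hTwo, hTotal⟩ := hinit.of_reflTransGen hr (k := k) hT
    (by simp [totalLeaves_replicate, leaves])
  rw [hTwo.eq_fullSym_of_singleton hr hTotal]
  exact sameShape_refl _

open RTree in
/-- On `n = r^k` leaves (`k ≥ 1`) with the uniform weight vector, the fully
symmetric r-furcating tree is an H-tree, and it is the unique such tree shape:
every H-tree has the shape of the fully symmetric tree. -/
theorem fullSym_unique_HTree (r : ℕ) (hr : 2 ≤ r) (k : ℕ) (hk : 1 ≤ k) :
    IsHTree r (r ^ k) (fullSym r k) ∧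
    ∀ T : RTree, IsHTree r (r ^ k) T → SameShape T (fullSym r k) :=
  fullSym_unique_HTree_general r hr k
end
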